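/- The set SO*(n) of special orthogonal n×n matrices not having -1 as an eigenvalue is path-connected: for any P ∈ SO*(n) there is a continuous path A(t), 0 ≤ t ≤ 1, in SO*(n) with A(0) = I and A(1) = P. -/

import Mathlib

/-!
The Cayley transform `C(a) = (1 - a)(1 + a)⁻¹` is an involution on the elements with `1 + a`
invertible (when `2` is invertible), and it exchanges unitary and skew-adjoint elements.
For a real skew-symmetric `S` every `1 + tS` is invertible, since `(1 + tS)ᵀ(1 + tS) = 1 - t²S²`
is positive definite, and `C(tS)` lies in `SO*(n)`: its determinant is
`det (1 - tS) / det (1 + tS) = 1` because `1 - tS = (1 + tS)ᵀ`. Given `P ∈ SO*(n)`, the matrix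
`S = C(P)` is skew-symmetric with `C(S) = P`, so `t ↦ C(tS)` joins `1` to `P` inside `SO*(n)`.
-/

open Matrix

open scoped Ring

theorem Commute.ringInverse_right {M₀ : Type*} [MonoidWithZero M₀] {a b : M₀}
    (h : Commute a b) : Commute a b⁻¹ʳ := by
  by_cases hb : IsUnit b
  · obtain ⟨u, rfl⟩ := hb
    rw [Ring.inverse_unit]
    exact h.units_inv_right
  · rw [Ring.inverse_non_unit _ hb]
    exact Commute.zero_right a

section Cayley

variable {R : Type*} [Ring R] {a : R}

noncomputable def cayley (a : R) : R := (1 - a) * (1 + a)⁻¹ʳ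

@[simp]
theorem cayley_zero : cayley (0 : R) = 1 := by
  simp [cayley]

theorem cayley_eq_inverse_mul (a : R) : cayley a = (1 + a)⁻¹ʳ * (1 - a) :=
  (Commute.ringInverse_right <|
    (Commute.one_left _).sub_left ((Commute.one_right a).add_right (Commute.refl a))).eq

theorem cayley_neg (a : R) : cayley (-a) = (1 + a) * (1 - a)⁻¹ʳ := by
  rw [cayley, sub_neg_eq_add, ← sub_eq_add_neg]

theorem one_sub_cayley (h : IsUnit (1 + a)) : 1 - cayley a = a * (1 + cayley a) := by
  have hmul : (1 + a) * cayley a = 1 - a := by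
    rw [cayley_eq_inverse_mul, Ring.mul_inverse_cancel_left _ _ h]
  have hdiff : 1 - cayley a - a * (1 + cayley a) = (1 - a) - (1 + a) * cayley a := by
    noncomm_ring
  rw [← sub_eq_zero, hdiff, hmul, sub_self]

theorem one_add_cayley (h : IsUnit (1 + a)) : 1 + cayley a = 2 * (1 + a)⁻¹ʳ := by
  conv_lhs => rw [← Ring.mul_inverse_cancel _ h, cayley, ← add_mul]
  rw [add_add_sub_cancel, one_add_one_eq_two]

theorem isUnit_one_add_cayley (h2 : IsUnit (2 : R)) (h : IsUnit (1 + a)) :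
    IsUnit (1 + cayley a) := by
  rw [one_add_cayley h]
  exact h2.mul h.ringInverse

theorem cayley_cayley (h2 : IsUnit (2 : R)) (h : IsUnit (1 + a)) : cayley (cayley a) = a := by
  rw [cayley, one_sub_cayley h, mul_assoc,
    Ring.mul_inverse_cancel _ (isUnit_one_add_cayley h2 h), mul_one]

theorem cayley_neg_mul_cayley (h : IsUnit (1 + a)) (h' : IsUnit (1 - a)) :
    cayley (-a) * cayley a = 1 := by
  rw [cayley_neg, cayley, mul_assoc, ← mul_assoc _ (1 - a), Ring.inverse_mul_cancel _ h', one_mul,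
    Ring.mul_inverse_cancel _ h]

variable [StarRing R]

theorem star_cayley (a : R) : star (cayley a) = cayley (star a) := by
  rw [cayley, star_mul, ← Ring.inverse_star, star_add, star_sub, star_one, cayley_eq_inverse_mul]

theorem cayley_mem_unitary (ha : a ∈ skewAdjoint R) (h : IsUnit (1 + a)) (h' : IsUnit (1 - a)) :
    cayley a ∈ unitary R := by
  rw [skewAdjoint.mem_iff] at ha
  refine Unitary.mem_iff.2 ⟨?_, ?_⟩
  · rw [star_cayley, ha, cayley_neg_mul_cayley h h']
  · have := cayley_neg_mul_cayley (a := -a) (by rwa [← sub_eq_add_neg]) (by rwa [sub_neg_eq_add])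
    rwa [neg_neg, ← ha, ← star_cayley] at this

theorem cayley_mem_skewAdjoint {u : R} (hu : u ∈ unitary R) : cayley u ∈ skewAdjoint R := by
  have hstar : IsUnit (star u) := Unitary.isUnit_coe (U := ⟨_, Unitary.star_mem hu⟩)
  have hsub : 1 - star u = star u * (u - 1) := by
    rw [mul_sub, Unitary.star_mul_self_of_mem hu, mul_one]
  have hadd : 1 + star u = star u * (1 + u) := by
    rw [mul_add, Unitary.star_mul_self_of_mem hu, mul_one, add_comm]
  rw [skewAdjoint.mem_iff, star_cayley, cayley_eq_inverse_mul, hsub, hadd,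
    Ring.inverse_mul (.inl hstar), mul_assoc, Ring.inverse_mul_cancel_left _ _ hstar,
    cayley_eq_inverse_mul, ← mul_neg, neg_sub]

end Cayley

namespace Matrix

variable {n : Type*} [Fintype n] [DecidableEq n]

open scoped ComplexOrder in
theorem isUnit_one_add_of_mem_skewAdjoint {𝕜 : Type*} [RCLike 𝕜] {S : Matrix n n 𝕜}
    (hS : S ∈ skewAdjoint (Matrix n n 𝕜)) : IsUnit (1 + S) := by
  have hgram : (1 + S)ᴴ * (1 + S) = 1 + Sᴴ * S := by
    rw [conjTranspose_add, conjTranspose_one, ← star_eq_conjTranspose, skewAdjoint.mem_iff.1 hS]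
    noncomm_ring
  have hpos : ((1 + S)ᴴ * (1 + S)).PosDef := by
    rw [hgram]
    exact PosDef.one.add_posSemidef (posSemidef_conjTranspose_mul_self S)
  rw [isUnit_iff_isUnit_det]
  refine isUnit_of_mul_isUnit_right (x := (1 + S)ᴴ.det) ?_
  rw [← det_mul, ← isUnit_iff_isUnit_det]
  exact hpos.isUnit

theorem det_cayley_of_transpose_eq_neg {R : Type*} [CommRing R] {S : Matrix n n R}
    (hS : Sᵀ = -S) (h : IsUnit (1 + S)) : (cayley S).det = 1 := by
  have : (1 - S).det = (1 + S).det := by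
    rw [← det_transpose (1 + S), transpose_add, transpose_one, hS, sub_eq_add_neg]
  rw [cayley, det_mul, ← nonsing_inv_eq_ringInverse, det_nonsing_inv, this,
    Ring.mul_inverse_cancel _ ((isUnit_iff_isUnit_det _).1 h)]

theorem _root_.Continuous.matrix_ringInverse {X K : Type*} [TopologicalSpace X] [Field K]
    [TopologicalSpace K] [IsTopologicalDivisionRing K] {f : X → Matrix n n K}
    (hf : Continuous f) (h : ∀ x, IsUnit (f x)) : Continuous fun x => (f x)⁻¹ʳ := by
  simp_rw [← nonsing_inv_eq_ringInverse]
  refine continuous_iff_continuousAt.2 fun x => (continuousAt_matrix_inv _ ?_).comp hf.continuousAt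
  rw [Ring.inverse_eq_inv']
  exact continuousAt_inv₀ ((isUnit_iff_isUnit_det _).1 (h x)).ne_zero

theorem isUnit_two {K : Type*} [Field K] [NeZero (2 : K)] : IsUnit (2 : Matrix n n K) := by
  simpa only [map_ofNat] using (IsUnit.mk0 (2 : K) two_ne_zero).map (algebraMap K (Matrix n n K))

def soStar (n : Type*) [Fintype n] [DecidableEq n] : Set (Matrix n n ℝ) :=
  {A | Aᵀ * A = 1 ∧ A.det = 1 ∧ IsUnit (1 + A)}

theorem cayley_mem_soStar {S : Matrix n n ℝ} (hS : S ∈ skewAdjoint (Matrix n n ℝ)) :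
    cayley S ∈ soStar n := by
  have hadd : IsUnit (1 + S) := isUnit_one_add_of_mem_skewAdjoint hS
  have hsub : IsUnit (1 - S) := by
    rw [sub_eq_add_neg]
    exact isUnit_one_add_of_mem_skewAdjoint (neg_mem hS)
  have hskew : Sᵀ = -S := by
    rw [← conjTranspose_eq_transpose_of_trivial, ← star_eq_conjTranspose]
    exact skewAdjoint.mem_iff.1 hS
  exact ⟨(mem_orthogonalGroup_iff' _ _).1 (cayley_mem_unitary hS hadd hsub),
    det_cayley_of_transpose_eq_neg hskew hadd, isUnit_one_add_cayley isUnit_two hadd⟩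

theorem joinedIn_soStar_one_cayley {S : Matrix n n ℝ} (hS : S ∈ skewAdjoint (Matrix n n ℝ)) :
    JoinedIn (soStar n) 1 (cayley S) := by
  refine JoinedIn.ofLine (f := fun t : ℝ => cayley (t • S)) (Continuous.continuousOn ?_)
    (by simp) (by simp) ?_
  · exact (by fun_prop : Continuous fun t : ℝ => 1 - t • S).mul
      (Continuous.matrix_ringInverse (f := fun t : ℝ => 1 + t • S) (by fun_prop)
        fun t => isUnit_one_add_of_mem_skewAdjoint (skewAdjoint.smul_mem t hS))
  · rintro _ ⟨t, -, rfl⟩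
    exact cayley_mem_soStar (skewAdjoint.smul_mem t hS)

end Matrix

/-- `SO*(n)`, the set of special orthogonal matrices without `-1` as an
eigenvalue, is path-connected: every element is joined to the identity by a
continuous path inside the set. -/
theorem SOstar_pathConnected {n : ℕ} :
    ∀ P ∈ {A : Matrix (Fin n) (Fin n) ℝ | Aᵀ * A = 1 ∧ A.det = 1 ∧ IsUnit (1 + A)},
      JoinedIn {A : Matrix (Fin n) (Fin n) ℝ | Aᵀ * A = 1 ∧ A.det = 1 ∧ IsUnit (1 + A)}
        (1 : Matrix (Fin n) (Fin n) ℝ) P := by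
  rintro P ⟨hPorth, -, hP⟩
  rw [← cayley_cayley isUnit_two hP]
  have hPorthogonal : P ∈ orthogonalGroup (Fin n) ℝ := (mem_orthogonalGroup_iff' _ _).2 hPorth
  exact joinedIn_soStar_one_cayley (cayley_mem_skewAdjoint hPorthogonal)
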